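/- (Barron–Cardaliaguet–Jensen) Let ν and τ be σ-maxitive measures on a σ-algebra 𝓑, and assume τ is essential. Then ν ≪ τ if and only if ν ⋘ τ; moreover, in this situation any two relative densities of ν with respect to τ agree τ-almost everywhere. -/

import Mathlib

open scoped ENNReal
open Set Filter MeasureTheory

variable {E : Type*}

/-- `f : E → [0,∞]` is `𝓑`-measurable: `{f > t}` is measurable for every `t`. -/
def Premeasurable [MeasurableSpace E] (f : E → ℝ≥0∞) : Prop :=
  ∀ t : ℝ≥0∞, MeasurableSet {x | t < f x}

/-- A maxitive measure on the σ-algebra of measurable subsets of `E`. -/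
def Maxitive [MeasurableSpace E] (ν : Set E → ℝ≥0∞) : Prop :=
  ν ∅ = 0 ∧ ∀ A B : Set E, MeasurableSet A → MeasurableSet B →
    ν (A ∪ B) = max (ν A) (ν B)

/-- A σ-maxitive measure: a maxitive measure commuting with countable nondecreasing unions. -/
def SigmaMaxitive [MeasurableSpace E] (ν : Set E → ℝ≥0∞) : Prop :=
  Maxitive ν ∧ ∀ B : ℕ → Set E, (∀ n, MeasurableSet (B n)) → Monotone B →
    ν (⋃ n, B n) = ⨆ n, ν (B n)

/-- `N` is `τ`-negligible: it is contained in a measurable set of `τ`-measure zero. -/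
def Negligible [MeasurableSpace E] (τ : Set E → ℝ≥0∞) (N : Set E) : Prop :=
  ∃ B : Set E, MeasurableSet B ∧ N ⊆ B ∧ τ B = 0

/-- The `τ`-essential supremum of `f` over `B`: `inf { t > 0 : B ∩ {f > t} is τ-negligible }`. -/
noncomputable def essSupOn [MeasurableSpace E] (τ : Set E → ℝ≥0∞) (f : E → ℝ≥0∞)
    (B : Set E) : ℝ≥0∞ :=
  sInf {t : ℝ≥0∞ | 0 < t ∧ Negligible τ (B ∩ {x | t < f x})}

/-- `ν ≪ τ`: absolute continuity. -/
def AbsCont [MeasurableSpace E] (ν τ : Set E → ℝ≥0∞) : Prop :=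
  ∀ B : Set E, MeasurableSet B → τ B = 0 → ν B = 0

/-- `ν ⋘ τ`: strong absolute continuity, i.e. `ν` has a measurable relative density
with respect to `τ`. -/
def StrongAbsCont [MeasurableSpace E] (ν τ : Set E → ℝ≥0∞) : Prop :=
  ∃ f : E → ℝ≥0∞, Premeasurable f ∧ ∀ B : Set E, MeasurableSet B → ν B = essSupOn τ f B

/-- `c` is a cardinal density of `ν`: `ν B = sup_{x ∈ B} c x` for every measurable `B`. -/
def IsCardinalDensity [MeasurableSpace E] (ν : Set E → ℝ≥0∞) (c : E → ℝ≥0∞) : Prop :=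
  ∀ B : Set E, MeasurableSet B → ν B = ⨆ x ∈ B, c x

/-- `τ` is essential: there exists a σ-finite σ-additive measure `m` with the same
null measurable sets. -/
def Essential [MeasurableSpace E] (τ : Set E → ℝ≥0∞) : Prop :=
  ∃ m : Measure E, SigmaFinite m ∧ ∀ B : Set E, MeasurableSet B → (0 < τ B ↔ 0 < m B)

/-- A σ-ideal of the σ-algebra of measurable sets. -/
def SigmaIdeal [MeasurableSpace E] (I : Set (Set E)) : Prop :=
  I.Nonempty ∧ (∀ S ∈ I, MeasurableSet S) ∧
  (∀ f : ℕ → Set E, (∀ n, f n ∈ I) → (⋃ n, f n) ∈ I) ∧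
  (∀ B S : Set E, MeasurableSet B → S ∈ I → B ⊆ S → B ∈ I)

/-- `τ` is σ-principal: every σ-ideal has a greatest element modulo `τ`-negligible sets. -/
def SigmaPrincipal [MeasurableSpace E] (τ : Set E → ℝ≥0∞) : Prop :=
  ∀ I : Set (Set E), SigmaIdeal I → ∃ L ∈ I, ∀ S ∈ I, Negligible τ (S \ L)

/-- A pseudo-multiplication on `[0,∞]`. -/
structure PseudoMul where
  op : ℝ≥0∞ → ℝ≥0∞ → ℝ≥0∞
  assoc : ∀ a b c, op (op a b) c = op a (op b c)
  contOn : ContinuousOn (fun q : ℝ≥0∞ × ℝ≥0∞ => op q.1 q.2) (Set.Ioo 0 ⊤ ×ˢ Set.univ)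
  contLeft : ∀ t, ContinuousOn (fun s => op s t) (Set.Ioi 0)
  monoLeft : ∀ t, Monotone fun s => op s t
  monoRight : ∀ s, Monotone (op s)
  one : ℝ≥0∞
  one_op : ∀ t, op one t = t
  eq_zero : ∀ s t, op s t = 0 → s = 0 ∨ t = 0
  zero_op : ∀ t, op 0 t = 0
  op_zero : ∀ t, op t 0 = 0

/-- `t` is `⊙`-finite: `inf_{s > 0} s ⊙ t = 0`. -/
def OdotFinite (p : PseudoMul) (t : ℝ≥0∞) : Prop :=
  (⨅ s ∈ Set.Ioi (0 : ℝ≥0∞), p.op s t) = 0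

/-- The idempotent `⊙`-integral `∫_B f ⊙ dτ = sup_{t ∈ [0,∞)} t ⊙ τ (B ∩ {f > t})`. -/
noncomputable def iInt [MeasurableSpace E] (p : PseudoMul) (τ : Set E → ℝ≥0∞)
    (f : E → ℝ≥0∞) (B : Set E) : ℝ≥0∞ :=
  ⨆ t ∈ Set.Iio (⊤ : ℝ≥0∞), p.op t (τ (B ∩ {x | t < f x}))

/-- `ν ≪_⊙ τ`: `ν B ≤ ∞ ⊙ τ B` for every measurable `B`. -/
def OdotAbsCont [MeasurableSpace E] (p : PseudoMul) (ν τ : Set E → ℝ≥0∞) : Prop :=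
  ∀ B : Set E, MeasurableSet B → ν B ≤ p.op ⊤ (τ B)

/-- `ν` is semi-`⊙`-finite. -/
def SemiOdotFinite [MeasurableSpace E] (p : PseudoMul) (ν : Set E → ℝ≥0∞) : Prop :=
  ∀ B : Set E, MeasurableSet B →
    ν B = ⨆ A ∈ {A : Set E | MeasurableSet A ∧ A ⊆ B ∧ OdotFinite p (ν A)}, ν A

/-- `τ` is σ-`⊙`-finite. -/
def SigmaOdotFinite [MeasurableSpace E] (p : PseudoMul) (τ : Set E → ℝ≥0∞) : Prop :=
  ∃ B : ℕ → Set E, (∀ n, MeasurableSet (B n)) ∧ (⋃ n, B n) = Set.univ ∧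
    ∀ n, OdotFinite p (τ (B n))

/-- Continuity from below. -/
def ContFromBelow [MeasurableSpace E] (ν : Set E → ℝ≥0∞) : Prop :=
  ∀ B : ℕ → Set E, (∀ n, MeasurableSet (B n)) → Monotone B →
    Tendsto (fun n => ν (B n)) atTop (nhds (ν (⋃ n, B n)))

/-- Continuity from above (no finiteness assumption). -/
def ContFromAbove [MeasurableSpace E] (ν : Set E → ℝ≥0∞) : Prop :=
  ∀ B : ℕ → Set E, (∀ n, MeasurableSet (B n)) → Antitone B →
    Tendsto (fun n => ν (B n)) atTop (nhds (ν (⋂ n, B n)))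

/-- An optimal measure: a maxitive measure continuous from below and from above. -/
def Optimal [MeasurableSpace E] (ν : Set E → ℝ≥0∞) : Prop :=
  Maxitive ν ∧ ContFromBelow ν ∧ ContFromAbove ν

/-!
An essential `τ` has the null sets of a finite measure `μ`, so every σ-ideal of measurable sets
has a largest element up to `τ`-negligible sets: take the union of a sequence of members along
which `μ` tends to its supremum. Applying this to the σ-ideals `{B | ν B ≤ d}`, for `d` in a
countable dense set `D ⊆ [0,∞]`, gives sets `L d`, and `f x = inf {d | x ∈ L d}` is a relative
density: σ-maxitivity gives `ν {f ≤ t} ≤ t`, which with `ν ≪ τ` bounds `ν B` by the essential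
supremum, and conversely `B ∩ {f > d} ⊆ B \ L d` is negligible as soon as `ν B < d`.
Two relative densities `u`, `v` agree almost everywhere because on a non-negligible measurable
set where `u ≤ a < b < v`, the essential supremum of `u` would be at most `a` and that of `v`
at least `b`.
-/

section Basic

variable [MeasurableSpace E] {ν τ : Set E → ℝ≥0∞}

lemma Premeasurable.measurableSet_le {f : E → ℝ≥0∞} (hf : Premeasurable f) (t : ℝ≥0∞) :
    MeasurableSet {x | f x ≤ t} := by
  simpa only [compl_ofPred, not_lt] using (hf t).compl

lemma Maxitive.mono (hν : Maxitive ν) {A B : Set E} (hA : MeasurableSet A)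
    (hB : MeasurableSet B) (hAB : A ⊆ B) : ν A ≤ ν B := by
  have h := hν.2 A B hA hB
  rw [union_eq_self_of_subset_left hAB] at h
  exact h ▸ le_max_left _ _

lemma measurableSet_accumulate {B : ℕ → Set E} (hB : ∀ n, MeasurableSet (B n)) (n : ℕ) :
    MeasurableSet (accumulate B n) := by
  rw [accumulate_def]
  exact .biUnion (to_countable _) fun k _ => hB k

lemma Maxitive.accumulate_le (hν : Maxitive ν) {B : ℕ → Set E}
    (hB : ∀ n, MeasurableSet (B n)) {t : ℝ≥0∞} (h : ∀ n, ν (B n) ≤ t) (n : ℕ) :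
    ν (accumulate B n) ≤ t := by
  induction n with
  | zero => simpa using h 0
  | succ n ih =>
    rw [accumulate_succ, hν.2 _ _ (measurableSet_accumulate hB n) (hB _)]
    exact max_le ih (h _)

lemma SigmaMaxitive.iUnion_le {ι : Type*} [Countable ι] (hν : SigmaMaxitive ν)
    {B : ι → Set E} (hB : ∀ i, MeasurableSet (B i)) {t : ℝ≥0∞} (h : ∀ i, ν (B i) ≤ t) :
    ν (⋃ i, B i) ≤ t := by
  rcases isEmpty_or_nonempty ι with hι | hι
  · simp [hν.1.1]
  obtain ⟨g, hg⟩ := exists_surjective_nat ι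
  rw [← hg.iUnion_comp, ← iUnion_accumulate,
    hν.2 _ (measurableSet_accumulate fun n => hB (g n)) monotone_accumulate]
  exact iSup_le (hν.1.accumulate_le (fun n => hB (g n)) fun n => h (g n))

lemma Negligible.mono {N S : Set E} (h : Negligible τ S) (hNS : N ⊆ S) : Negligible τ N :=
  let ⟨C, hC, hSC, hC0⟩ := h
  ⟨C, hC, hNS.trans hSC, hC0⟩

lemma Maxitive.negligible_union (hτ : Maxitive τ) {M N : Set E} (hM : Negligible τ M)
    (hN : Negligible τ N) : Negligible τ (M ∪ N) := by
  obtain ⟨A, hA, hMA, hA0⟩ := hM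
  obtain ⟨B, hB, hNB, hB0⟩ := hN
  exact ⟨A ∪ B, hA.union hB, union_subset_union hMA hNB, by simp [hτ.2 A B hA hB, hA0, hB0]⟩

lemma SigmaMaxitive.negligible_iUnion {ι : Type*} [Countable ι] (hτ : SigmaMaxitive τ)
    {N : ι → Set E} (h : ∀ i, Negligible τ (N i)) : Negligible τ (⋃ i, N i) := by
  choose C hC hNC hC0 using h
  exact ⟨⋃ i, C i, .iUnion hC, iUnion_mono hNC,
    le_antisymm (hτ.iUnion_le hC fun i => (hC0 i).le) zero_le⟩

lemma SigmaMaxitive.sigmaIdeal_setOf_le (hν : SigmaMaxitive ν) (a : ℝ≥0∞) :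
    SigmaIdeal {B : Set E | MeasurableSet B ∧ ν B ≤ a} :=
  ⟨⟨∅, .empty, hν.1.1.trans_le zero_le⟩, fun _ hS => hS.1,
    fun _ hB => ⟨.iUnion fun n => (hB n).1, hν.iUnion_le (fun n => (hB n).1) fun n => (hB n).2⟩,
    fun _ _ hB hS hBS => ⟨hB, (hν.1.mono hB hS.1 hBS).trans hS.2⟩⟩

end Basic

section EssSup

variable [MeasurableSpace E] {ν τ : Set E → ℝ≥0∞} {f : E → ℝ≥0∞} {B : Set E}

lemma essSupOn_le_of_negligible {a : ℝ≥0∞} (h : Negligible τ (B ∩ {x | a < f x})) :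
    essSupOn τ f B ≤ a :=
  le_of_forall_gt_imp_ge_of_dense fun _ hr =>
    sInf_le ⟨zero_le.trans_lt hr, h.mono (inter_subset_inter_right _ fun _ hx => hr.trans hx)⟩

lemma le_essSupOn_of_forall_le {b : ℝ≥0∞} (hB : ¬ Negligible τ B) (h : ∀ x ∈ B, b ≤ f x) :
    b ≤ essSupOn τ f B :=
  le_sInf fun _ ⟨_, hr⟩ =>
    le_of_not_gt fun hrb => hB (hr.mono fun x hx => ⟨hx, hrb.trans_le (h x hx)⟩)

lemma Maxitive.le_essSupOn (hν : Maxitive ν) (hac : AbsCont ν τ) (hf : Premeasurable f)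
    (hlev : ∀ t, ν {x | f x ≤ t} ≤ t) (hB : MeasurableSet B) : ν B ≤ essSupOn τ f B := by
  refine le_sInf fun t ⟨_, N, hN, hBN, hN0⟩ => ?_
  have hgt := hB.inter (hf t)
  have hle := hB.inter (hf.measurableSet_le t)
  have hsplit : B ∩ {x | t < f x} ∪ B ∩ {x | f x ≤ t} = B := by
    rw [← inter_union_distrib_left, inter_eq_left]
    exact fun x _ => lt_or_ge t (f x)
  rw [← hsplit, hν.2 _ _ hgt hle]
  refine max_le ?_ ((hν.mono hle (hf.measurableSet_le t) inter_subset_right).trans (hlev t))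
  exact (hν.mono hgt hN hBN).trans ((hac N hN hN0).trans_le zero_le)

lemma StrongAbsCont.absCont (h : StrongAbsCont ν τ) : AbsCont ν τ := by
  obtain ⟨f, -, hνf⟩ := h
  intro B hB hτB
  rw [hνf B hB]
  exact le_antisymm (essSupOn_le_of_negligible ⟨B, hB, inter_subset_left, hτB⟩) zero_le

end EssSup

section SigmaPrincipal

variable [MeasurableSpace E] {I : Set (Set E)}

lemma SigmaIdeal.union_mem (hI : SigmaIdeal I) {S T : Set E} (hS : S ∈ I) (hT : T ∈ I) :
    S ∪ T ∈ I := by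
  have h : (⋃ n : ℕ, if n = 0 then S else T) = S ∪ T := by
    ext x
    simp only [mem_iUnion, mem_union]
    constructor
    · rintro ⟨n, hn⟩
      split_ifs at hn <;> tauto
    · rintro (hx | hx)
      exacts [⟨0, by simpa using hx⟩, ⟨1, by simpa using hx⟩]
  exact h ▸ hI.2.2.1 _ fun n => by split_ifs <;> assumption

lemma SigmaIdeal.exists_forall_measure_diff_eq_zero (hI : SigmaIdeal I) (μ : Measure E)
    [IsFiniteMeasure μ] : ∃ L ∈ I, ∀ S ∈ I, μ (S \ L) = 0 := by
  obtain ⟨u, -, hu, huI⟩ := exists_seq_tendsto_sSup (hI.1.image μ) (OrderTop.bddAbove _)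
  choose S hSI hSu using huI
  have hLI : ⋃ n, S n ∈ I := hI.2.2.1 S hSI
  have hL_sup : sSup (μ '' I) ≤ μ (⋃ n, S n) :=
    le_of_tendsto' hu fun n => hSu n ▸ measure_mono (subset_iUnion S n)
  refine ⟨⋃ n, S n, hLI, fun T hT => ?_⟩
  have hTL := hI.union_mem hLI hT
  have h : μ (⋃ n, S n) + μ (T \ ⋃ n, S n) ≤ μ (⋃ n, S n) + 0 := by
    rw [add_zero, ← measure_union disjoint_sdiff_right ((hI.2.1 T hT).diff (hI.2.1 _ hLI)),
      union_sdiff_self]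
    exact (le_sSup (mem_image_of_mem μ hTL)).trans hL_sup
  exact le_antisymm ((ENNReal.add_le_add_iff_left (measure_ne_top μ _)).1 h) zero_le

lemma Essential.sigmaPrincipal {τ : Set E → ℝ≥0∞} (hess : Essential τ) : SigmaPrincipal τ := by
  obtain ⟨m, hm, hτm⟩ := hess
  obtain ⟨μ, hμ, hmμ, -⟩ := exists_isFiniteMeasure_absolutelyContinuous m
  intro I hI
  obtain ⟨L, hL, hLmax⟩ := hI.exists_forall_measure_diff_eq_zero μ
  refine ⟨L, hL, fun S hS => ⟨S \ L, (hI.2.1 S hS).diff (hI.2.1 L hL), subset_rfl, ?_⟩⟩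
  by_contra hne
  exact ((hτm _ ((hI.2.1 S hS).diff (hI.2.1 L hL))).1 (pos_iff_ne_zero.2 hne)).ne'
    (hmμ (hLmax S hS))

end SigmaPrincipal

section Density

variable {D : Set ℝ≥0∞} {L : D → Set E}

noncomputable def densityOfLevels (L : D → Set E) (x : E) : ℝ≥0∞ :=
  ⨅ (d : D) (_ : x ∈ L d), (d : ℝ≥0∞)

lemma densityOfLevels_le {x : E} {d : D} (hx : x ∈ L d) : densityOfLevels L x ≤ d :=
  iInf₂_le d hx

lemma densityOfLevels_lt_iff {x : E} {s : ℝ≥0∞} :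
    densityOfLevels L x < s ↔ ∃ d : D, x ∈ L d ∧ (d : ℝ≥0∞) < s := by
  simp only [densityOfLevels, iInf_lt_iff, exists_prop]

variable [MeasurableSpace E] {ν τ : Set E → ℝ≥0∞}

lemma measurable_densityOfLevels [Countable D] (hL : ∀ d, MeasurableSet (L d)) :
    Measurable (densityOfLevels L) := by
  refine measurable_of_Iio fun s => ?_
  have h : densityOfLevels L ⁻¹' Iio s = ⋃ (d : {d : D // (d : ℝ≥0∞) < s}), L d := by
    ext x
    simp only [mem_preimage, mem_Iio, densityOfLevels_lt_iff, mem_iUnion, Subtype.exists,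
      exists_prop]
    tauto
  exact h ▸ .iUnion fun d => hL d

lemma SigmaMaxitive.measure_densityOfLevels_le [Countable D] (hν : SigmaMaxitive ν)
    (hL : ∀ d, MeasurableSet (L d)) (hLν : ∀ d, ν (L d) ≤ d) (t : ℝ≥0∞) :
    ν {x | densityOfLevels L x ≤ t} ≤ t := by
  refine le_of_forall_gt_imp_ge_of_dense fun s hts => ?_
  have hsub : {x | densityOfLevels L x ≤ t} ⊆ ⋃ (d : {d : D // (d : ℝ≥0∞) < s}), L d := by
    intro x hx
    obtain ⟨d, hxd, hds⟩ := densityOfLevels_lt_iff.1 (lt_of_le_of_lt hx hts)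
    exact mem_iUnion.2 ⟨⟨d, hds⟩, hxd⟩
  calc ν {x | densityOfLevels L x ≤ t}
      ≤ ν (⋃ (d : {d : D // (d : ℝ≥0∞) < s}), L d) :=
        hν.1.mono (measurableSet_le (measurable_densityOfLevels hL) measurable_const)
          (.iUnion fun d => hL d) hsub
    _ ≤ s := hν.iUnion_le (fun d : {d : D // (d : ℝ≥0∞) < s} => hL d) fun d => (hLν d).trans d.2.le

theorem SigmaPrincipal.strongAbsCont (hτ : SigmaPrincipal τ) (hν : SigmaMaxitive ν)
    (hac : AbsCont ν τ) : StrongAbsCont ν τ := by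
  obtain ⟨D, hDc, hD⟩ := TopologicalSpace.exists_countable_dense ℝ≥0∞
  have := hDc.to_subtype
  choose L hL hLmax using fun d : D => hτ _ (hν.sigmaIdeal_setOf_le d)
  have hf := measurable_densityOfLevels fun d => (hL d).1
  have hpre : Premeasurable (densityOfLevels L) := fun t => measurableSet_lt measurable_const hf
  refine ⟨densityOfLevels L, hpre, fun B hB => le_antisymm ?_ ?_⟩
  · exact hν.1.le_essSupOn hac hpre
      (hν.measure_densityOfLevels_le (fun d => (hL d).1) fun d => (hL d).2) hB
  · refine le_of_forall_gt_imp_ge_of_dense fun s hs => ?_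
    obtain ⟨d, hdD, hBd, hds⟩ := hD.exists_between hs
    refine (essSupOn_le_of_negligible ((hLmax ⟨d, hdD⟩ B ⟨hB, hBd.le⟩).mono ?_)).trans hds.le
    rintro x ⟨hxB, hxd⟩
    exact ⟨hxB, fun hxL => (densityOfLevels_le hxL).not_gt hxd⟩

end Density

section Uniqueness

variable [MeasurableSpace E] {τ : Set E → ℝ≥0∞} {u v : E → ℝ≥0∞}

lemma negligible_le_inter_lt_of_essSupOn_eq (hτ : τ ∅ = 0) (hu : Premeasurable u)
    (hv : Premeasurable v)
    (huv : ∀ B : Set E, MeasurableSet B → essSupOn τ u B = essSupOn τ v B)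
    {a b : ℝ≥0∞} (hab : a < b) : Negligible τ ({x | u x ≤ a} ∩ {x | b < v x}) := by
  by_contra hA
  have hu_le : essSupOn τ u ({x | u x ≤ a} ∩ {x | b < v x}) ≤ a :=
    essSupOn_le_of_negligible ⟨∅, .empty, fun _ ⟨⟨hxa, _⟩, (hax : a < _)⟩ => hxa.not_gt hax, hτ⟩
  have hv_ge : b ≤ essSupOn τ v ({x | u x ≤ a} ∩ {x | b < v x}) :=
    le_essSupOn_of_forall_le hA fun _ hx => hx.2.le
  rw [← huv _ ((hu.measurableSet_le a).inter (hv b))] at hv_ge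
  exact (hab.trans_le (hv_ge.trans hu_le)).false

lemma SigmaMaxitive.negligible_lt_of_essSupOn_eq (hτ : SigmaMaxitive τ) (hu : Premeasurable u)
    (hv : Premeasurable v)
    (huv : ∀ B : Set E, MeasurableSet B → essSupOn τ u B = essSupOn τ v B) :
    Negligible τ {x | u x < v x} := by
  obtain ⟨D, hDc, hD⟩ := TopologicalSpace.exists_countable_dense ℝ≥0∞
  have := hDc.to_subtype
  refine (hτ.negligible_iUnion fun p : {p : D × D // (p.1 : ℝ≥0∞) < p.2} =>
    negligible_le_inter_lt_of_essSupOn_eq hτ.1.1 hu hv huv p.2).mono fun x hx => ?_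
  obtain ⟨a, ha, hua, hav⟩ := hD.exists_between hx
  obtain ⟨b, hb, hab, hbv⟩ := hD.exists_between hav
  exact mem_iUnion.2 ⟨⟨(⟨a, ha⟩, ⟨b, hb⟩), hab⟩, hua.le, hbv⟩

lemma SigmaMaxitive.negligible_ne_of_essSupOn_eq (hτ : SigmaMaxitive τ) (hu : Premeasurable u)
    (hv : Premeasurable v)
    (huv : ∀ B : Set E, MeasurableSet B → essSupOn τ u B = essSupOn τ v B) :
    Negligible τ {x | u x ≠ v x} :=
  (hτ.1.negligible_union (hτ.negligible_lt_of_essSupOn_eq hu hv huv)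
    (hτ.negligible_lt_of_essSupOn_eq hv hu fun B hB => (huv B hB).symm)).mono
    fun _ hx => hx.lt_or_gt

end Uniqueness

/-- (Barron–Cardaliaguet–Jensen) If `τ` is an essential σ-maxitive measure, then `ν ≪ τ`
iff `ν ⋘ τ`, and any two relative densities agree `τ`-almost everywhere. -/
theorem barron_cardaliaguet_jensen [MeasurableSpace E] (ν τ : Set E → ℝ≥0∞)
    (hν : SigmaMaxitive ν) (hτ : SigmaMaxitive τ) (hess : Essential τ) :
    (AbsCont ν τ ↔ StrongAbsCont ν τ) ∧
    (∀ f g : E → ℝ≥0∞, Premeasurable f → Premeasurable g →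
      (∀ B : Set E, MeasurableSet B → ν B = essSupOn τ f B) →
      (∀ B : Set E, MeasurableSet B → ν B = essSupOn τ g B) →
      Negligible τ {x | f x ≠ g x}) :=
  ⟨⟨hess.sigmaPrincipal.strongAbsCont hν, StrongAbsCont.absCont⟩,
    fun _ _ hf hg hνf hνg =>
      hτ.negligible_ne_of_essSupOn_eq hf hg fun B hB => (hνf B hB).symm.trans (hνg B hB)⟩
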